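/- Let f be a ReQU network of depth N+1 with architecture (p_0, …, p_{N+1}), all weights and shifts bounded by 1 in absolute value. For indices define B_{k,i}(x) = σ_{v_k} ∘ W_{k−1} ∘ σ_{v_{k−1}} ∘ ⋯ ∘ σ_{v_i} ∘ W_{i−1} x and A_{j,k}(x) = W_j ∘ σ_{v_j} ∘ ⋯ ∘ W_k ∘ σ_{v_k} ∘ W_{k−1} x. Then for any x with ‖x‖_∞ ≤ K and any 1 ≤ i ≤ k ≤ N: ‖B_{k,i}(x)‖_∞ ≤ ( ∏_{ℓ=1}^{k−i+1} (p_{k−ℓ} + 1)^{2^ℓ} ) (K ∨ 1)^{2^{k−i+1}}. Moreover, for any x, y with ‖x‖_∞ ≤ K, ‖y‖_∞ ≤ K: ‖A_{j,k}(x) − A_{j,k}(y)‖_∞ ≤ 2^{j−k+1} ( ∏_{ℓ=0}^{j−k+1} (p_{j−ℓ} + 1)^{2^ℓ} ) (K ∨ 1)^{2^{j−k+1}} ‖x − y‖_∞. -/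
import Mathlib


/-- The ReQU activation function `σ(t) = (max(t,0))²`. -/
noncomputable def σReQU (t : ℝ) : ℝ := (max t 0) ^ 2


lemma sigma_abs_le (t : ℝ) : |σReQU t| ≤ |t|^2 := by
  rw [σReQU, abs_of_nonneg (by positivity)]
  have : |max t 0| ≤ |t| := by
    rcases le_total t 0 with h | h
    · simp [max_eq_right h, abs_nonneg]
    · simp [max_eq_left h]
  calc (max t 0)^2 ≤ |max t 0|^2 := by rw [sq_abs]
    _ ≤ |t|^2 := by nlinarith [abs_nonneg (max t 0)]

lemma sigma_lip (a b : ℝ) : |σReQU a - σReQU b| ≤ (|a| + |b|) * |a - b| := by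
  rw [σReQU, σReQU]
  have h1 : |max a 0 - max b 0| ≤ |a - b| := abs_max_sub_max_le_abs a b 0
  have h2 : |max a 0 + max b 0| ≤ |a| + |b| := by
    rcases le_total a 0 with ha | ha <;> rcases le_total b 0 with hb | hb <;>
      simp only [max_eq_right, max_eq_left, *, abs_le] <;>
      constructor <;> nlinarith [abs_nonneg a, abs_nonneg b, le_abs_self a, le_abs_self b, neg_abs_le a, neg_abs_le b]
  calc |(max a 0)^2 - (max b 0)^2| = |max a 0 + max b 0| * |max a 0 - max b 0| := by
        rw [← abs_mul]; ring_nf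
    _ ≤ (|a| + |b|) * |a - b| :=
        mul_le_mul h2 h1 (abs_nonneg _) (by positivity)

lemma iccProd (f : ℕ → ℝ) (m : ℕ) :
    ∏ l ∈ Finset.Icc 1 m, f l = ∏ i ∈ Finset.range m, f (i+1) := by
  induction m with
  | zero => simp
  | succ m ih => rw [Finset.prod_range_succ, ← ih, Finset.prod_Icc_succ_top (by omega)]

lemma prodQ_succ (p : ℕ → ℕ) (st m : ℕ) :
    (∏ l ∈ Finset.Icc 1 (m+1), ((p (st + (m+1) - l) : ℝ) + 1) ^ (2^l))
    = ((p (st+m) : ℝ)+1)^2 * (∏ l ∈ Finset.Icc 1 m, ((p (st + m - l) : ℝ) + 1) ^ (2^l))^2 := by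
  rw [iccProd, iccProd, Finset.prod_range_succ', ← Finset.prod_pow]
  have h0 : ((p (st + (m+1) - (0+1)) : ℝ) + 1) ^ (2^(0+1)) = ((p (st+m) : ℝ)+1)^2 := by
    norm_num
  rw [h0, mul_comm]
  refine congrArg _ (Finset.prod_congr rfl fun i hi => ?_)
  have : st + (m+1) - (i+1+1) = st + m - (i+1) := by omega
  rw [this, ← pow_mul, pow_succ]

lemma icc0Prod (p : ℕ → ℕ) (st m : ℕ) :
    (∏ l ∈ Finset.Icc 0 m, ((p (st + m - l) : ℝ) + 1) ^ (2^l))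
    = ((p (st+m) : ℝ)+1) * ∏ l ∈ Finset.Icc 1 m, ((p (st + m - l) : ℝ) + 1) ^ (2^l) := by
  have : Finset.Icc 0 m = insert 0 (Finset.Icc 1 m) := by
    ext l; simp [Finset.mem_Icc]; omega
  rw [this, Finset.prod_insert (by simp)]
  norm_num

lemma sum_abs_le {n : ℕ} (w t : Fin n → ℝ) (C : ℝ) (hw : ∀ l, |w l| ≤ 1)
    (ht : ∀ l, |t l| ≤ C) (hC : 0 ≤ C) : |∑ l, w l * t l| ≤ n * C := by
  calc |∑ l, w l * t l| ≤ ∑ l, |w l * t l| := Finset.abs_sum_le_sum_abs _ _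
    _ ≤ ∑ _l : Fin n, C := by
        apply Finset.sum_le_sum
        intro l _
        rw [abs_mul]
        calc |w l| * |t l| ≤ 1 * C := mul_le_mul (hw l) (ht l) (abs_nonneg _) one_pos.le
          _ = C := one_mul C
    _ = n * C := by simp [Finset.sum_const, Finset.card_univ, nsmul_eq_mul]


/-- Partial forward evaluation starting at layer `st`:
`Bpart p W v st m = σ_{v_{st+m}} ∘ W_{st+m-1} ∘ ⋯ ∘ σ_{v_{st+1}} ∘ W_{st}`,
mapping `ℝ^{p st} → ℝ^{p (st+m)}`. In the paper's notation,
`B_{k,i} = Bpart p W v (i-1) (k-i+1)` (input at layer `i-1`, output at layer `k`,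
so `st = i-1`, `m = k-i+1`, `k = st+m`). -/
noncomputable def Bpart (p : ℕ → ℕ)
    (W : (i : ℕ) → Fin (p (i + 1)) → Fin (p i) → ℝ)
    (v : (i : ℕ) → Fin (p i) → ℝ) (st : ℕ) :
    (m : ℕ) → (Fin (p st) → ℝ) → Fin (p (st + m)) → ℝ
  | 0, x => x
  | m + 1, x => fun j =>
      σReQU ((∑ l, W (st + m) j l * Bpart p W v st m x l) - v (st + m + 1) j)

/-- Partial evaluation ending with a linear layer:
`Apart p W v st m = W_{st+m} ∘ σ_{v_{st+m}} ∘ ⋯ ∘ W_{st+1} ∘ σ_{v_{st+1}} ∘ W_{st}`,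
mapping `ℝ^{p st} → ℝ^{p (st+m+1)}`. In the paper's notation,
`A_{j,k} = Apart p W v (k-1) (j-k+1)` (so `st = k-1`, `m = j-k+1`, `j = st+m`). -/
noncomputable def Apart (p : ℕ → ℕ)
    (W : (i : ℕ) → Fin (p (i + 1)) → Fin (p i) → ℝ)
    (v : (i : ℕ) → Fin (p i) → ℝ) (st : ℕ) :
    (m : ℕ) → (Fin (p st) → ℝ) → Fin (p (st + m + 1)) → ℝ
  | 0, x => fun j => ∑ l, W st j l * x l
  | m + 1, x => fun j =>
      ∑ l, W (st + m + 1) j l * σReQU (Apart p W v st m x l - v (st + m + 1) l)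

/-- Bounds on the partial maps of a ReQU network with all parameters in `[-1,1]`
(indices renamed via `st = i-1`, `m = k-i+1` for `B_{k,i}` and `st = k-1`,
`m = j-k+1` for `A_{j,k}`; the norm on `Fin _ → ℝ` is the sup-norm `‖·‖_∞`):
for `‖x‖_∞ ≤ K`,
`‖B_{k,i}(x)‖_∞ ≤ (∏_{ℓ=1}^{k-i+1} (p_{k-ℓ}+1)^{2^ℓ}) (K ∨ 1)^{2^{k-i+1}}`;
and for `‖x‖_∞, ‖y‖_∞ ≤ K`,
`‖A_{j,k}(x) - A_{j,k}(y)‖_∞ ≤ 2^{j-k+1} (∏_{ℓ=0}^{j-k+1} (p_{j-ℓ}+1)^{2^ℓ})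
  (K ∨ 1)^{2^{j-k+1}} ‖x-y‖_∞`. -/
theorem statement_13 (N : ℕ) (p : ℕ → ℕ)
    (W : (i : ℕ) → Fin (p (i + 1)) → Fin (p i) → ℝ)
    (v : (i : ℕ) → Fin (p i) → ℝ)
    (hW : ∀ i, i ≤ N → ∀ j l, |W i j l| ≤ 1)
    (hv : ∀ i, 1 ≤ i → i ≤ N → ∀ j, |v i j| ≤ 1)
    (K : ℝ) (hK : 0 ≤ K) :
    (∀ st m : ℕ, 1 ≤ m → st + m ≤ N →
      ∀ x : Fin (p st) → ℝ, ‖x‖ ≤ K →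
      ∀ j, |Bpart p W v st m x j| ≤
        (∏ l ∈ Finset.Icc 1 m, ((p (st + m - l) : ℝ) + 1) ^ (2 ^ l)) *
          (max K 1) ^ (2 ^ m)) ∧
    (∀ st m : ℕ, st + m ≤ N →
      ∀ x y : Fin (p st) → ℝ, ‖x‖ ≤ K → ‖y‖ ≤ K →
      ∀ j, |Apart p W v st m x j - Apart p W v st m y j| ≤
        2 ^ m * (∏ l ∈ Finset.Icc 0 m, ((p (st + m - l) : ℝ) + 1) ^ (2 ^ l)) *
          (max K 1) ^ (2 ^ m) * ‖x - y‖) := by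
  have hM1 : (1:ℝ) ≤ max K 1 := le_max_right _ _
  have hIpr : ∀ st m : ℕ, (1:ℝ) ≤ ∏ l ∈ Finset.Icc 1 m, ((p (st + m - l) : ℝ) + 1) ^ (2 ^ l) := by
    intro st m
    calc (1:ℝ) = ∏ _l ∈ Finset.Icc 1 m, (1:ℝ) := by simp
      _ ≤ ∏ l ∈ Finset.Icc 1 m, ((p (st + m - l) : ℝ) + 1) ^ (2 ^ l) :=
        Finset.prod_le_prod (fun l _ => zero_le_one)
          (fun l _ => one_le_pow₀ (le_add_of_nonneg_left (Nat.cast_nonneg _)))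
  have hQ1 : ∀ st m : ℕ, (1:ℝ) ≤
      (∏ l ∈ Finset.Icc 1 m, ((p (st + m - l) : ℝ) + 1) ^ (2 ^ l)) * (max K 1) ^ (2 ^ m) := by
    intro st m
    have := hIpr st m
    have h2 : (1:ℝ) ≤ (max K 1) ^ (2 ^ m) := one_le_pow₀ hM1
    nlinarith
  -- B bound for all m ≥ 0
  have hB : ∀ m st : ℕ, st + m ≤ N → ∀ x : Fin (p st) → ℝ, ‖x‖ ≤ K →
      ∀ j, |Bpart p W v st m x j| ≤
        (∏ l ∈ Finset.Icc 1 m, ((p (st + m - l) : ℝ) + 1) ^ (2 ^ l)) * (max K 1) ^ (2 ^ m) := by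
    intro m
    induction m with
    | zero =>
      intro st _ x hx j
      simp only [Bpart, Finset.Icc_eq_empty_of_lt (by norm_num : (0:ℕ) < 1),
        Finset.prod_empty, one_mul, pow_zero, pow_one]
      calc |x j| = ‖x j‖ := rfl
        _ ≤ ‖x‖ := norm_le_pi_norm x j
        _ ≤ K := hx
        _ ≤ max K 1 := le_max_left _ _
    | succ m ih =>
      intro st hst x hx j
      set Q : ℝ := (∏ l ∈ Finset.Icc 1 m, ((p (st + m - l) : ℝ) + 1) ^ (2 ^ l)) * (max K 1) ^ (2 ^ m) with hQdef
      have hQge : (1:ℝ) ≤ Q := hQ1 st m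
      have hBm := ih st (by omega) x hx
      have hS : |∑ l, W (st + m) j l * Bpart p W v st m x l| ≤ (p (st + m) : ℝ) * Q :=
        sum_abs_le _ _ Q (fun l => hW (st + m) (by omega) j l) hBm (by linarith)
      have hv' : |v (st + m + 1) j| ≤ 1 := hv (st + m + 1) (by omega) (by omega) j
      have habs : |(∑ l, W (st + m) j l * Bpart p W v st m x l) - v (st + m + 1) j|
          ≤ ((p (st + m) : ℝ) + 1) * Q := by
        calc _ ≤ |∑ l, W (st + m) j l * Bpart p W v st m x l| + |v (st + m + 1) j| :=
              abs_sub _ _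
          _ ≤ (p (st + m) : ℝ) * Q + 1 := add_le_add hS hv'
          _ ≤ ((p (st + m) : ℝ) + 1) * Q := by
              nlinarith [hQge, (Nat.cast_nonneg (p (st + m)) : (0:ℝ) ≤ (p (st + m) : ℝ))]
      have hsig : |Bpart p W v st (m+1) x j| ≤ ((p (st + m) : ℝ) + 1) ^ 2 * Q ^ 2 := by
        show |σReQU _| ≤ _
        calc |σReQU _| ≤ |(∑ l, W (st + m) j l * Bpart p W v st m x l) - v (st + m + 1) j| ^ 2 :=
              sigma_abs_le _
          _ ≤ (((p (st + m) : ℝ) + 1) * Q) ^ 2 := by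
              apply pow_le_pow_left₀ (abs_nonneg _) habs
          _ = ((p (st + m) : ℝ) + 1) ^ 2 * Q ^ 2 := by ring
      refine hsig.trans (le_of_eq ?_)
      have e : 2^(m+1) = 2^m * 2 := pow_succ 2 m
      rw [prodQ_succ, hQdef, e, pow_mul]
      ring
  -- A m x j = ∑ W (st+m) * B m x
  have hAB : ∀ (m st : ℕ) (x : Fin (p st) → ℝ) j,
      Apart p W v st m x j = ∑ l, W (st + m) j l * Bpart p W v st m x l := by
    intro m
    induction m with
    | zero => intro st x j; rfl
    | succ m ih =>
      intro st x j
      show (∑ l, W (st + m + 1) j l * σReQU (Apart p W v st m x l - v (st + m + 1) l)) = _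
      refine Finset.sum_congr rfl fun l _ => ?_
      rw [ih]
      rfl
  refine ⟨fun st m _ hst x hx j => hB m st hst x hx j, ?_⟩
  intro st m
  induction m with
  | zero =>
    intro hst x y hx hy j
    have hd : ∀ l, |x l - y l| ≤ ‖x - y‖ := by
      intro l
      calc |x l - y l| = ‖(x - y) l‖ := by simp [Pi.sub_apply]
        _ ≤ ‖x - y‖ := norm_le_pi_norm (x - y) l
    have key : |Apart p W v st 0 x j - Apart p W v st 0 y j| ≤ (p st : ℝ) * ‖x - y‖ := by
      show |(∑ l, W st j l * x l) - ∑ l, W st j l * y l| ≤ _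
      rw [← Finset.sum_sub_distrib]
      have : ∀ l ∈ Finset.univ, W st j l * x l - W st j l * y l = W st j l * (x l - y l) := by
        intro l _; ring
      rw [Finset.sum_congr rfl this]
      exact sum_abs_le _ _ _ (fun l => hW st (by omega) j l) hd (norm_nonneg _)
    refine key.trans ?_
    simp only [pow_zero, Finset.Icc_self, Finset.prod_singleton, Nat.add_zero, Nat.sub_zero,
      pow_one, one_mul]
    have hp : (0:ℝ) ≤ (p st : ℝ) := Nat.cast_nonneg _
    have h1 : (p st : ℝ) ≤ ((p st : ℝ) + 1) * (K ⊔ 1) := by nlinarith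
    exact mul_le_mul_of_nonneg_right h1 (norm_nonneg _)
  | succ m ih =>
    intro hst x y hx hy j
    set Ipr : ℝ := ∏ l ∈ Finset.Icc 1 m, ((p (st + m - l) : ℝ) + 1) ^ (2 ^ l) with hIdef
    set Mm : ℝ := (max K 1) ^ (2 ^ m) with hMdef
    set Q : ℝ := Ipr * Mm with hQdef
    have hQge : (1:ℝ) ≤ Q := hQ1 st m
    have hd0 : (0:ℝ) ≤ ‖x - y‖ := norm_nonneg _
    set d : ℝ := ‖x - y‖ with hddef
    -- bound on |A_m z l|
    have hAbnd : ∀ (z : Fin (p st) → ℝ), ‖z‖ ≤ K → ∀ l : Fin (p (st + m + 1)),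
        |Apart p W v st m z l| ≤ (p (st + m) : ℝ) * Q := by
      intro z hz l
      rw [hAB]
      exact sum_abs_le _ _ Q (fun l' => hW (st + m) (by omega) l l')
        (hB m st (by omega) z hz) (by linarith)
    -- ih in convenient form
    have hihQ : ∀ l : Fin (p (st + m + 1)),
        |Apart p W v st m x l - Apart p W v st m y l| ≤
          2 ^ m * (((p (st + m) : ℝ) + 1) * Q) * d := by
      intro l
      have := ih (by omega) x y hx hy l
      rw [icc0Prod] at this
      calc |Apart p W v st m x l - Apart p W v st m y l| ≤ _ := this
        _ = 2 ^ m * (((p (st + m) : ℝ) + 1) * Q) * d := by rw [hQdef]; ring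
    set C : ℝ := (2 * ((p (st + m) : ℝ) * Q + 1)) * (2 ^ m * (((p (st + m) : ℝ) + 1) * Q) * d)
      with hCdef
    have hC0 : 0 ≤ C := by
      have : (0:ℝ) ≤ (p (st + m) : ℝ) := Nat.cast_nonneg _
      have h2 : (0:ℝ) < 2 ^ m := by positivity
      rw [hCdef]; positivity
    have hterm : ∀ l : Fin (p (st + m + 1)),
        |σReQU (Apart p W v st m x l - v (st + m + 1) l)
          - σReQU (Apart p W v st m y l - v (st + m + 1) l)| ≤ C := by
      intro l
      have hv' : |v (st + m + 1) l| ≤ 1 := hv (st + m + 1) (by omega) (by omega) l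
      have hax := hAbnd x hx l
      have hay := hAbnd y hy l
      have h1 : |Apart p W v st m x l - v (st + m + 1) l| ≤ (p (st + m) : ℝ) * Q + 1 :=
        (abs_sub _ _).trans (add_le_add hax hv')
      have h2 : |Apart p W v st m y l - v (st + m + 1) l| ≤ (p (st + m) : ℝ) * Q + 1 :=
        (abs_sub _ _).trans (add_le_add hay hv')
      have h3 : (Apart p W v st m x l - v (st + m + 1) l)
          - (Apart p W v st m y l - v (st + m + 1) l)
          = Apart p W v st m x l - Apart p W v st m y l := by ring
      calc _ ≤ (|Apart p W v st m x l - v (st + m + 1) l|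
              + |Apart p W v st m y l - v (st + m + 1) l|)
            * |(Apart p W v st m x l - v (st + m + 1) l)
              - (Apart p W v st m y l - v (st + m + 1) l)| := sigma_lip _ _
        _ ≤ (2 * ((p (st + m) : ℝ) * Q + 1)) * (2 ^ m * (((p (st + m) : ℝ) + 1) * Q) * d) := by
            rw [h3]
            apply mul_le_mul (by linarith) (hihQ l) (abs_nonneg _)
            have : (0:ℝ) ≤ (p (st + m) : ℝ) := Nat.cast_nonneg _
            nlinarith
        _ = C := rfl
    have key : |Apart p W v st (m+1) x j - Apart p W v st (m+1) y j|
        ≤ (p (st + m + 1) : ℝ) * C := by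
      show |(∑ l, W (st + m + 1) j l * σReQU (Apart p W v st m x l - v (st + m + 1) l))
        - ∑ l, W (st + m + 1) j l * σReQU (Apart p W v st m y l - v (st + m + 1) l)| ≤ _
      rw [← Finset.sum_sub_distrib]
      have : ∀ l ∈ Finset.univ,
          W (st + m + 1) j l * σReQU (Apart p W v st m x l - v (st + m + 1) l)
            - W (st + m + 1) j l * σReQU (Apart p W v st m y l - v (st + m + 1) l)
          = W (st + m + 1) j l * (σReQU (Apart p W v st m x l - v (st + m + 1) l)
            - σReQU (Apart p W v st m y l - v (st + m + 1) l)) := by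
        intro l _; ring
      rw [Finset.sum_congr rfl this]
      exact sum_abs_le _ _ C (fun l => hW (st + m + 1) (by omega) j l) hterm hC0
    refine key.trans ?_
    have hrw : (2:ℝ) ^ (m+1) * (∏ l ∈ Finset.Icc 0 (m+1), ((p (st + (m+1) - l) : ℝ) + 1) ^ (2 ^ l))
        * (max K 1) ^ (2 ^ (m+1)) * d
        = 2 ^ (m+1) * (((p (st + m + 1) : ℝ) + 1) * (((p (st + m) : ℝ) + 1) ^ 2 * Q ^ 2)) * d := by
      have e : 2^(m+1) = 2^m * 2 := pow_succ 2 m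
      have hpe : p (st + (m+1)) = p (st + m + 1) := rfl
      rw [icc0Prod, prodQ_succ, hpe, hQdef, hIdef, hMdef, e, pow_mul, mul_pow]
      ring
    rw [hrw]
    have hp1 : (0:ℝ) ≤ (p (st + m + 1) : ℝ) := Nat.cast_nonneg _
    have hp0 : (0:ℝ) ≤ (p (st + m) : ℝ) := Nat.cast_nonneg _
    have h2m : (0:ℝ) < 2 ^ m := by positivity
    rw [hCdef]
    have hfac : (p (st + m) : ℝ) * Q + 1 ≤ ((p (st + m) : ℝ) + 1) * Q := by nlinarith
    have hstep : (p (st + m + 1) : ℝ) * ((2 * ((p (st + m) : ℝ) * Q + 1))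
          * (2 ^ m * (((p (st + m) : ℝ) + 1) * Q) * d))
        ≤ (p (st + m + 1) : ℝ) * ((2 * (((p (st + m) : ℝ) + 1) * Q))
          * (2 ^ m * (((p (st + m) : ℝ) + 1) * Q) * d)) := by
      apply mul_le_mul_of_nonneg_left _ hp1
      apply mul_le_mul_of_nonneg_right _ (by positivity)
      linarith
    refine hstep.trans ?_
    have : (p (st + m + 1) : ℝ) * ((2 * (((p (st + m) : ℝ) + 1) * Q))
          * (2 ^ m * (((p (st + m) : ℝ) + 1) * Q) * d))
        = 2 ^ (m+1) * ((p (st + m + 1) : ℝ) * (((p (st + m) : ℝ) + 1) ^ 2 * Q ^ 2)) * d := by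
      rw [pow_succ]; ring
    rw [this]
    apply mul_le_mul_of_nonneg_right _ hd0
    apply mul_le_mul_of_nonneg_left _ (by positivity)
    apply mul_le_mul_of_nonneg_right (by linarith) (by positivity)
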